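/- Let (G_t) be a growing sequence of finite trees (one growth step per unit time, new vertices attach as leaves) containing two vertex-disjoint paths from distinct neighbors of some vertex v̄, each of which increases in length by exactly 1 at every step from some time t_0 onward. If at some time T ≥ t_0 these two paths are the two deepest subtrees rooted at neighbors of the Jordan center v*_T = v̄, then for all t ≥ T the Jordan center of G_t equals v̄ (persistence). -/
import Mathlib


/-- Depth (max distance from `v`) of the subtree hanging off `v` at its neighbor `u`,
within the subtree with vertex set `A` of an ambient tree `T`. -/
noncomputable def subDepthIn {V : Type*} (T : SimpleGraph V) (A : Finset V)
    (v u : V) : ℕ :=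
  (A.filter (fun x => T.dist v x = T.dist u x + 1)).sup (fun x => T.dist v x)

section JordanAux

variable {V : Type*} {T : SimpleGraph V}

open SimpleGraph Finset

variable {V : Type*} {T : SimpleGraph V}

/-- In a tree, every path realizes the distance. -/
lemma tree_path_length (hT : T.IsTree) {a b : V} {p : T.Walk a b} (hp : p.IsPath) :
    p.length = T.dist a b := by
  obtain ⟨q, hq, hql⟩ := hT.isConnected.exists_path_of_dist a b
  rw [(hT.existsUnique_path a b).unique hp hq, hql]

/-- splitting a path at a support vertex gives additive distances -/
lemma tree_dist_add_of_mem_support (hT : T.IsTree) {a b z : V} {p : T.Walk a b}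
    (hp : p.IsPath) (hz : z ∈ p.support) :
    T.dist a z + T.dist z b = T.dist a b := by
  classical
  have h1 := tree_path_length hT (hp.takeUntil hz)
  have h2 := tree_path_length hT (hp.dropUntil hz)
  have h3 := congrArg SimpleGraph.Walk.length (p.take_spec hz)
  rw [Walk.length_append, h1, h2, tree_path_length hT hp] at h3
  exact h3

/-- adjacent vertices have different distances to any vertex, in a tree -/
lemma tree_adj_dist_ne (hT : T.IsTree) (v : V) {x y : V} (h : T.Adj x y) :
    T.dist v x ≠ T.dist v y := by
  classical
  intro heq
  obtain ⟨p, hp, hpl⟩ := hT.isConnected.exists_path_of_dist v x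
  by_cases hy : y ∈ p.support
  · have h1 := tree_dist_add_of_mem_support hT hp hy
    have h2 : T.dist y x = 1 := (SimpleGraph.dist_eq_one_iff_adj).mpr h.symm
    omega
  · set q : T.Walk v y := p.append (Walk.cons h Walk.nil) with hqdef
    have hq : q.IsPath := by
      rw [Walk.isPath_def, hqdef, Walk.support_append]
      refine List.Nodup.append hp.support_nodup (by simp) ?_
      intro z hz1 hz2
      simp only [Walk.support_cons, Walk.support_nil, List.tail_cons, List.mem_singleton] at hz2
      subst hz2; exact hy hz1
    have := tree_path_length hT hq
    rw [hqdef, Walk.length_append] at this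
    simp only [Walk.length_cons, Walk.length_nil] at this
    omega

lemma tree_adj_dist_cases (hT : T.IsTree) (v : V) {x y : V} (h : T.Adj x y) :
    T.dist v x = T.dist v y + 1 ∨ T.dist v y = T.dist v x + 1 := by
  have h1 : T.dist x y = 1 := (SimpleGraph.dist_eq_one_iff_adj).mpr h
  have h2 : T.dist v x ≤ T.dist v y + T.dist y x := hT.isConnected.dist_triangle
  have h3 : T.dist v y ≤ T.dist v x + T.dist x y := hT.isConnected.dist_triangle
  have h4 := tree_adj_dist_ne hT v h
  rw [SimpleGraph.dist_comm (u := y) (v := x)] at h2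
  omega

/-- existence of a direction: first step of a geodesic -/
lemma tree_exists_dir (hT : T.IsTree) {a z : V} (h : a ≠ z) :
    ∃ u, T.Adj a u ∧ T.dist a z = T.dist u z + 1 := by
  obtain ⟨p, hp, hpl⟩ := hT.isConnected.exists_path_of_dist a z
  cases p with
  | nil => exact absurd rfl h
  | cons hadj q =>
    rename_i u
    refine ⟨u, hadj, ?_⟩
    have h1 : T.dist u z ≤ q.length := SimpleGraph.dist_le q
    have h2 : T.dist a z ≤ T.dist a u + T.dist u z := hT.isConnected.dist_triangle
    have h3 : T.dist a u = 1 := (SimpleGraph.dist_eq_one_iff_adj).mpr hadj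
    simp only [Walk.length_cons] at hpl
    omega

/-- the second vertex of any path equals the unique direction -/
lemma tree_getVert_one (hT : T.IsTree) {a b u : V} (hu : T.Adj a u)
    (hd : T.dist a b = T.dist u b + 1) {p : T.Walk a b} (hp : p.IsPath) :
    p.getVert 1 = u := by
  classical
  obtain ⟨r, hr, hrl⟩ := hT.isConnected.exists_path_of_dist u b
  have hna : a ∉ r.support := by
    intro hmem
    have h1 := tree_dist_add_of_mem_support hT hr hmem
    have h2 : T.dist u a = 1 := (SimpleGraph.dist_eq_one_iff_adj).mpr hu.symm
    omega
  have hq : (Walk.cons hu r).IsPath := (Walk.cons_isPath_iff hu r).mpr ⟨hr, hna⟩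
  have := (hT.existsUnique_path a b).unique hp hq
  rw [this, Walk.getVert_cons_succ, Walk.getVert_zero]

/-- uniqueness of direction -/
lemma tree_dir_unique (hT : T.IsTree) {a b u u' : V} (hu : T.Adj a u) (hu' : T.Adj a u')
    (h1 : T.dist a b = T.dist u b + 1) (h2 : T.dist a b = T.dist u' b + 1) : u = u' := by
  obtain ⟨p, hp, hpl⟩ := hT.isConnected.exists_path_of_dist a b
  rw [← tree_getVert_one hT hu h1 hp, ← tree_getVert_one hT hu' h2 hp]

/-- every vertex on a geodesic from `a` (other than `a`) lies in the same direction -/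
lemma tree_dir_of_mem_support (hT : T.IsTree) {a w u z : V} (hu : T.Adj a u)
    (hd : T.dist a w = T.dist u w + 1) {p : T.Walk a w} (hp : p.IsPath)
    (hz : z ∈ p.support) (hza : z ≠ a) :
    T.dist a z = T.dist u z + 1 := by
  classical
  have hsplit := tree_dist_add_of_mem_support hT hp hz
  obtain ⟨u3, hu3, hd3⟩ := tree_exists_dir hT hza.symm
  have h1 : T.dist u3 w ≤ T.dist u3 z + T.dist z w := hT.isConnected.dist_triangle
  have h2 : T.dist a w ≤ T.dist a u3 + T.dist u3 w := hT.isConnected.dist_triangle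
  have h3 : T.dist a u3 = 1 := (SimpleGraph.dist_eq_one_iff_adj).mpr hu3
  have h4 : T.dist a w = T.dist u3 w + 1 := by omega
  have := tree_dir_unique hT hu3 hu h4 hd
  rw [← this]; exact hd3

/-- two vertices in different directions from `a`: distance goes through `a` -/
lemma tree_dist_add_of_diff_dir (hT : T.IsTree) {a w x u u' : V}
    (hu : T.Adj a u) (hu' : T.Adj a u') (hne : u ≠ u')
    (hw : T.dist a w = T.dist u w + 1) (hx : T.dist a x = T.dist u' x + 1) :
    T.dist w x = T.dist w a + T.dist a x := by
  obtain ⟨p, hp, hpl⟩ := hT.isConnected.exists_path_of_dist a w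
  obtain ⟨q, hq, hql⟩ := hT.isConnected.exists_path_of_dist a x
  set W : T.Walk w x := p.reverse.append q with hWdef
  have hW : W.IsPath := by
    rw [Walk.isPath_def, hWdef, Walk.support_append]
    refine List.Nodup.append hp.reverse.support_nodup ?_ ?_
    · have := hq.support_nodup
      rw [q.support_eq_cons] at this
      exact this.of_cons
    · intro z hz1 hz2
      have hzp : z ∈ p.support := by
        rw [Walk.support_reverse] at hz1; exact List.mem_reverse.mp hz1
      have hzq : z ∈ q.support := by
        rw [q.support_eq_cons]; exact List.mem_cons_of_mem _ hz2
      have hza : z ≠ a := by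
        intro h; subst h
        have := hq.support_nodup
        rw [q.support_eq_cons] at this
        exact (List.nodup_cons.mp this).1 hz2
      have e1 := tree_dir_of_mem_support hT hu hw hp hzp hza
      have e2 := tree_dir_of_mem_support hT hu' hx hq hzq hza
      exact hne (tree_dir_unique hT hu hu' e1 e2)
  have hlen := tree_path_length hT hW
  rw [hWdef, Walk.length_append, Walk.length_reverse, hpl, hql] at hlen
  rw [← hlen, SimpleGraph.dist_comm (u := w) (v := a)]

lemma le_subDepthIn {A : Finset V} {vb u x : V} (hx : x ∈ A)
    (h : T.dist vb x = T.dist u x + 1) : T.dist vb x ≤ subDepthIn T A vb u :=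
  Finset.le_sup (Finset.mem_filter.mpr ⟨hx, h⟩)

/-- one growth step increases each subtree depth by at most 1 -/
lemma subDepthIn_succ_le (hT : T.IsTree) {A B : Finset V} {vb u : V}
    (hvb : vb ∈ A) (hadj : T.Adj vb u)
    (hconv : ∀ a b c : V, a ∈ A → c ∈ A → T.dist a b + T.dist b c = T.dist a c → b ∈ A)
    (hleaf : ∀ x : V, x ∈ B → x ∉ A → ∃ y ∈ A, T.Adj x y) :
    subDepthIn T B vb u ≤ subDepthIn T A vb u + 1 := by
  apply Finset.sup_le
  intro x hx
  rw [Finset.mem_filter] at hx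
  obtain ⟨hxB, hxd⟩ := hx
  by_cases hxA : x ∈ A
  · exact le_trans (le_subDepthIn hxA hxd) (Nat.le_succ _)
  · obtain ⟨y, hyA, hxy⟩ := hleaf x hxB hxA
    have hdxy : T.dist x y = 1 := (SimpleGraph.dist_eq_one_iff_adj).mpr hxy
    rcases tree_adj_dist_cases hT vb hxy with hc | hc
    · -- dist vb x = dist vb y + 1
      by_cases hyvb : y = vb
      · have : T.dist vb y = 0 := by rw [hyvb, SimpleGraph.dist_self]
        omega
      · obtain ⟨u3, hu3, hd3⟩ := tree_exists_dir hT (Ne.symm hyvb)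
        have h1 : T.dist u3 x ≤ T.dist u3 y + T.dist y x := hT.isConnected.dist_triangle
        have h2 : T.dist vb x ≤ T.dist vb u3 + T.dist u3 x := hT.isConnected.dist_triangle
        have h3 : T.dist vb u3 = 1 := (SimpleGraph.dist_eq_one_iff_adj).mpr hu3
        have h4 : T.dist y x = 1 := by rw [SimpleGraph.dist_comm (u := y) (v := x)]; exact hdxy
        have h5 : T.dist vb x = T.dist u3 x + 1 := by omega
        have h6 : u3 = u := tree_dir_unique hT hu3 hadj h5 hxd
        subst h6
        have h7 : T.dist vb y ≤ subDepthIn T A vb u3 := le_subDepthIn hyA hd3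
        omega
    · -- dist vb y = dist vb x + 1 : then x is on geodesic vb → y, so x ∈ A, contradiction
      exact absurd (hconv vb x y hvb hyA (by omega)) hxA


end JordanAux

/-- Persistence of the Jordan center.  `(S t)` is a growing sequence of subtrees of an ambient
tree `T` (one leaf-attachment growth step per unit time).  The subtrees of `vb` at two distinct
neighbors `u1, u2` increase in depth by exactly 1 at every step from time `t0` onward.  If at
some time `t1 ≥ t0` the vertex `vb` is a Jordan center of `G_{t1}` and these two subtrees are
the two deepest subtrees rooted at neighbors of `vb`, then for all `t ≥ t1` the vertex `vb`
remains a Jordan center of `G_t`. -/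
theorem stmt14 {V : Type*} (T : SimpleGraph V) (hT : T.IsTree)
    (S : ℕ → Finset V)
    (hmono : ∀ t, S t ⊆ S (t + 1))
    (hconv : ∀ t, ∀ a b c : V, a ∈ S t → c ∈ S t →
      T.dist a b + T.dist b c = T.dist a c → b ∈ S t)
    (hleaf : ∀ t, ∀ x : V, x ∈ S (t + 1) → x ∉ S t → ∃ y ∈ S t, T.Adj x y)
    (vb u1 u2 : V) (hadj1 : T.Adj vb u1) (hadj2 : T.Adj vb u2) (hne : u1 ≠ u2)
    (t0 : ℕ)
    (hgrow1 : ∀ t, t0 ≤ t → subDepthIn T (S (t + 1)) vb u1 = subDepthIn T (S t) vb u1 + 1)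
    (hgrow2 : ∀ t, t0 ≤ t → subDepthIn T (S (t + 1)) vb u2 = subDepthIn T (S t) vb u2 + 1)
    (t1 : ℕ) (ht1 : t0 ≤ t1) (hvb : vb ∈ S t1)
    (hmin : ∀ w ∈ S t1,
      (S t1).sup (fun z => T.dist vb z) ≤ (S t1).sup (fun z => T.dist w z))
    (hdeepest : ∀ u : V, T.Adj vb u → u ≠ u1 → u ≠ u2 →
      subDepthIn T (S t1) vb u ≤ subDepthIn T (S t1) vb u2)
    (horder : subDepthIn T (S t1) vb u2 ≤ subDepthIn T (S t1) vb u1) :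
    ∀ t, t1 ≤ t → ∀ w ∈ S t,
      (S t).sup (fun z => T.dist vb z) ≤ (S t).sup (fun z => T.dist w z) := by
  classical
  set d : ℕ → V → ℕ := fun t u => subDepthIn T (S t) vb u with hd
  -- the invariant
  have inv : ∀ t, t1 ≤ t → (vb ∈ S t ∧
      (∀ u, T.Adj vb u → u ≠ u1 → d t u ≤ d t u2) ∧
      d t u2 ≤ d t u1 ∧ d t u1 ≤ d t u2 + 1) := by
    intro t ht
    induction t, ht using Nat.le_induction with
    | base =>
      refine ⟨hvb, ?_, horder, ?_⟩
      · intro u hu hu1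
        by_cases hu2 : u = u2
        · subst hu2; exact le_refl _
        · exact hdeepest u hu hu1 hu2
      · -- from minimality of vb
        by_contra hcon
        push_neg at hcon
        have hc : d t1 u2 + 2 ≤ d t1 u1 := hcon
        have hpos : 0 < d t1 u1 := by omega
        have hnonempty : ((S t1).filter (fun x => T.dist vb x = T.dist u1 x + 1)).Nonempty := by
          by_contra hemp
          rw [Finset.not_nonempty_iff_eq_empty] at hemp
          have : d t1 u1 = 0 := by
            show subDepthIn T (S t1) vb u1 = 0
            rw [subDepthIn, hemp]; rfl
          omega
        obtain ⟨x, hxmem, hxval⟩ := Finset.exists_mem_eq_sup _ hnonempty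
          (fun x => T.dist vb x)
        rw [Finset.mem_filter] at hxmem
        obtain ⟨hxS, hxd⟩ := hxmem
        have hdvx : T.dist vb x = d t1 u1 := hxval.symm
        have hdu1 : T.dist vb u1 = 1 := (SimpleGraph.dist_eq_one_iff_adj).mpr hadj1
        have hu1S : u1 ∈ S t1 := hconv t1 vb u1 x hvb hxS (by omega)
        -- eccentricity of u1 is < d t1 u1
        have hecc1 : ∀ z ∈ S t1, T.dist u1 z + 1 ≤ d t1 u1 := by
          intro z hz
          by_cases hzvb : z = vb
          · have : T.dist u1 z = 1 := by
              rw [hzvb, SimpleGraph.dist_comm (u := u1) (v := vb)]; exact hdu1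
            omega
          · obtain ⟨u3, hu3, hd3⟩ := tree_exists_dir hT (Ne.symm hzvb)
            have hzle : T.dist vb z ≤ d t1 u3 := le_subDepthIn hz hd3
            by_cases hu31 : u3 = u1
            · rw [hu31] at hd3 hzle
              omega
            · have hle2 : d t1 u3 ≤ d t1 u2 := by
                by_cases h3 : u3 = u2
                · subst h3; exact le_refl _
                · exact hdeepest u3 hu3 hu31 h3
              have h4 : T.dist u1 z ≤ T.dist u1 vb + T.dist vb z := hT.isConnected.dist_triangle
              have h5 : T.dist u1 vb = 1 := by
                rw [SimpleGraph.dist_comm (u := u1) (v := vb)]; exact hdu1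
              omega
        have h6 : d t1 u1 ≤ (S t1).sup (fun z => T.dist vb z) := by
          rw [← hdvx]; exact Finset.le_sup hxS
        have h7 : (S t1).sup (fun z => T.dist u1 z) + 1 ≤ d t1 u1 := by
          have : ∀ z ∈ S t1, T.dist u1 z ≤ d t1 u1 - 1 := by
            intro z hz; have := hecc1 z hz; omega
          have h8 : (S t1).sup (fun z => T.dist u1 z) ≤ d t1 u1 - 1 :=
            Finset.sup_le this
          omega
        have := hmin u1 hu1S
        omega
    | succ s hs ih =>
      obtain ⟨ivb, i1, i2, i3⟩ := ih
      have hstep : ∀ u, T.Adj vb u → d (s+1) u ≤ d s u + 1 := by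
        intro u hu
        exact subDepthIn_succ_le hT ivb hu (hconv s) (hleaf s)
      have hg1 : d (s+1) u1 = d s u1 + 1 := hgrow1 s (le_trans ht1 hs)
      have hg2 : d (s+1) u2 = d s u2 + 1 := hgrow2 s (le_trans ht1 hs)
      refine ⟨hmono s ivb, ?_, by omega, by omega⟩
      intro u hu hu1
      by_cases hu2 : u = u2
      · subst hu2; exact le_refl _
      · have := hstep u hu
        have := i1 u hu hu1
        omega
  -- eccentricity of vb is at most d t u1
  have heccvb : ∀ t, t1 ≤ t → (S t).sup (fun z => T.dist vb z) ≤ d t u1 := by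
    intro t ht
    obtain ⟨ivb, i1, i2, i3⟩ := inv t ht
    apply Finset.sup_le
    intro z hz
    by_cases hzvb : z = vb
    · rw [hzvb, SimpleGraph.dist_self]; exact Nat.zero_le _
    · obtain ⟨u3, hu3, hd3⟩ := tree_exists_dir hT (Ne.symm hzvb)
      have hzle : T.dist vb z ≤ d t u3 := le_subDepthIn hz hd3
      by_cases hu31 : u3 = u1
      · subst hu31; exact le_trans hzle (le_refl _)
      · have := i1 u3 hu3 hu31
        omega
  intro t ht w hw
  rcases eq_or_lt_of_le ht with heq | hlt
  · subst heq; exact hmin w hw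
  · obtain ⟨s, rfl⟩ : ∃ s, t = s + 1 := ⟨t - 1, by omega⟩
    have hs : t1 ≤ s := by omega
    obtain ⟨ivb, i1, i2, i3⟩ := inv (s+1) (by omega)
    obtain ⟨ivb', i1', i2', i3'⟩ := inv s hs
    have hg1 : d (s+1) u1 = d s u1 + 1 := hgrow1 s (le_trans ht1 hs)
    have hg2 : d (s+1) u2 = d s u2 + 1 := hgrow2 s (le_trans ht1 hs)
    by_cases hwvb : w = vb
    · rw [hwvb]
    · obtain ⟨u'', hu'', hd''⟩ := tree_exists_dir hT (Ne.symm hwvb)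
      -- choose the deep subtree not containing w
      have key : ∀ ui : V, T.Adj vb ui → u'' ≠ ui → 0 < d (s+1) ui →
          d (s+1) ui + 1 ≤ (S (s+1)).sup (fun z => T.dist w z) := by
        intro ui hui hneui hpos
        have hnonempty : ((S (s+1)).filter
            (fun x => T.dist vb x = T.dist ui x + 1)).Nonempty := by
          by_contra hemp
          rw [Finset.not_nonempty_iff_eq_empty] at hemp
          have : d (s+1) ui = 0 := by
            show subDepthIn T (S (s+1)) vb ui = 0
            rw [subDepthIn, hemp]; rfl
          omega
        obtain ⟨x, hxmem, hxval⟩ := Finset.exists_mem_eq_sup _ hnonempty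
          (fun x => T.dist vb x)
        rw [Finset.mem_filter] at hxmem
        obtain ⟨hxS, hxd⟩ := hxmem
        have hdist : T.dist w x = T.dist w vb + T.dist vb x :=
          tree_dist_add_of_diff_dir hT hu'' hui hneui hd'' hxd
        have h1 : T.dist w x ≤ (S (s+1)).sup (fun z => T.dist w z) := Finset.le_sup hxS
        have h2 : 1 ≤ T.dist w vb := by
          rw [SimpleGraph.dist_comm (u := w) (v := vb)]; omega
        have h3 : T.dist vb x = d (s+1) ui := hxval.symm
        omega
      have hvbe := heccvb (s+1) (by omega)
      by_cases hcase : u'' = u1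
      · -- use u2
        have := key u2 hadj2 (by rw [hcase]; exact hne) (by omega)
        omega
      · -- use u1
        have := key u1 hadj1 hcase (by omega)
        omega
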